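/- arXiv:2208.13046 — 2 statements merged into one kernel-verified Lean document; each statement's English description precedes it below -/
import Mathlib

section
/- Let e1, e2, e3 be integers with e1 ≠ 0. In the DGA A = ⋀(y, a1, a2, a3, x1, x2, x3) with |y|=1, |a_i|=2, |x_i|=3, d y = e1·a1 + e2·a2 + e3·a3, d a_i = 0, d x_i = a_i², the element x̃1 := x1 − e1⁻²( y·dy − 2 e2 y·a2 − 2 e3 y·a3 + e2² x2 + e3² x3 ) satisfies d x̃1 = 2 e1⁻² e2 e3 · a2 ∧ a3. -/
/-!
Since `d a₂ = d a₃ = d (d y) = 0`, the Leibniz rule gives `d (y · w) = d y · w` for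
`w ∈ {d y, a₂, a₃}`, and the degree-2 elements `aᵢ` commute. Writing `v = e₂ a₂ + e₃ a₃`,
the correction term then has differential
`(d y)² - 2 (d y) v + e₂² a₂² + e₃² a₃² = (d y - v)² - v² + e₂² a₂² + e₃² a₃² = e₁² a₁² - 2 e₂ e₃ a₂ a₃`,
whose first summand cancels `d x₁ = a₁²` after scaling by `e₁⁻²`.
-/

section GradedDifferential

variable {R A : Type*} [CommRing R] [Ring A] [Algebra R A] {𝒜 : ℕ → Submodule R A}

theorem map_mul_eq_of_map_eq_zero {d : A →ₗ[R] A}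
    (hleibniz : ∀ m n : ℕ, ∀ v w : A, v ∈ 𝒜 m → w ∈ 𝒜 n →
      d (v * w) = d v * w + ((-1 : R)) ^ m • (v * d w))
    {m n : ℕ} {v w : A} (hv : v ∈ 𝒜 m) (hw : w ∈ 𝒜 n) (hdw : d w = 0) :
    d (v * w) = d v * w := by
  rw [hleibniz m n v w hv hw, hdw, mul_zero, smul_zero, add_zero]

theorem commute_of_even_mul
    (hkoszul : ∀ m n : ℕ, ∀ v w : A, v ∈ 𝒜 m → w ∈ 𝒜 n →
      v * w = ((-1 : R)) ^ (m * n) • (w * v))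
    {m n : ℕ} {v w : A} (hv : v ∈ 𝒜 m) (hw : w ∈ 𝒜 n) (hmn : Even (m * n)) :
    Commute v w := by
  rw [Commute, SemiconjBy, hkoszul m n v w hv hw, hmn.neg_one_pow, one_smul]

end GradedDifferential

theorem mul_self_sub_inv_sq_smul_eq {𝕜 A : Type*} [Field 𝕜] [Ring A] [Algebra 𝕜 A]
    {c₁ c₂ c₃ : 𝕜} (hc₁ : c₁ ≠ 0) {a₁ a₂ a₃ u : A}
    (h₁₂ : Commute a₁ a₂) (h₁₃ : Commute a₁ a₃) (h₂₃ : Commute a₂ a₃)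
    (hu : u = c₁ • a₁ + c₂ • a₂ + c₃ • a₃) :
    a₁ * a₁ - (c₁ ^ 2)⁻¹ • (u * u - (2 * c₂) • (u * a₂) - (2 * c₃) • (u * a₃)
        + c₂ ^ 2 • (a₂ * a₂) + c₃ ^ 2 • (a₃ * a₃)) =
      (2 * (c₁ ^ 2)⁻¹ * c₂ * c₃) • (a₂ * a₃) := by
  subst hu
  simp only [add_mul, mul_add, smul_mul_assoc, mul_smul_comm, smul_smul, h₁₂.eq, h₁₃.eq,
    h₂₃.eq, smul_add, smul_sub]
  match_scalars <;> field_simp <;> ring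

theorem stmt_1_general
    (e1 e2 e3 : ℤ) (he1 : e1 ≠ 0)
    (A : Type) [Ring A] [Algebra ℝ A]
    (𝒜 : ℕ → Submodule ℝ A)
    (d : A →ₗ[ℝ] A)
    (hdd : ∀ v : A, d (d v) = 0)
    (hdeg : ∀ n : ℕ, ∀ v ∈ 𝒜 n, d v ∈ 𝒜 (n + 1))
    (hleibniz : ∀ m n : ℕ, ∀ v w : A, v ∈ 𝒜 m → w ∈ 𝒜 n →
      d (v * w) = d v * w + ((-1 : ℝ)) ^ m • (v * d w))
    (hkoszul : ∀ m n : ℕ, ∀ v w : A, v ∈ 𝒜 m → w ∈ 𝒜 n →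
      v * w = ((-1 : ℝ)) ^ (m * n) • (w * v))
    (y a1 a2 a3 x1 x2 x3 : A)
    (hy : y ∈ 𝒜 1) (ha1 : a1 ∈ 𝒜 2) (ha2 : a2 ∈ 𝒜 2) (ha3 : a3 ∈ 𝒜 2)
    (hdy : d y = (e1 : ℝ) • a1 + (e2 : ℝ) • a2 + (e3 : ℝ) • a3)
    (hda2 : d a2 = 0) (hda3 : d a3 = 0)
    (hdx1 : d x1 = a1 * a1) (hdx2 : d x2 = a2 * a2) (hdx3 : d x3 = a3 * a3) :
    d (x1 - (((e1 : ℝ) ^ 2)⁻¹) •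
        (y * d y - (2 * (e2 : ℝ)) • (y * a2) - (2 * (e3 : ℝ)) • (y * a3)
          + (e2 : ℝ) ^ 2 • x2 + (e3 : ℝ) ^ 2 • x3)) =
      (2 * ((e1 : ℝ) ^ 2)⁻¹ * (e2 : ℝ) * (e3 : ℝ)) • (a2 * a3) := by
  have hdy_dy : d (y * d y) = d y * d y :=
    map_mul_eq_of_map_eq_zero hleibniz hy (hdeg 1 y hy) (hdd y)
  have hdy_a2 : d (y * a2) = d y * a2 := map_mul_eq_of_map_eq_zero hleibniz hy ha2 hda2
  have hdy_a3 : d (y * a3) = d y * a3 := map_mul_eq_of_map_eq_zero hleibniz hy ha3 hda3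
  have even_four : Even (2 * 2) := ⟨2, rfl⟩
  simp only [map_sub, map_add, map_smul, hdy_dy, hdy_a2, hdy_a3, hdx1, hdx2, hdx3]
  exact mul_self_sub_inv_sq_smul_eq (Int.cast_ne_zero.mpr he1)
    (commute_of_even_mul hkoszul ha1 ha2 even_four)
    (commute_of_even_mul hkoszul ha1 ha3 even_four)
    (commute_of_even_mul hkoszul ha2 ha3 even_four) hdy

/-- in the free graded-commutative DGA `⋀(y, a1, a2, a3, x1, x2, x3)`
with `|y|=1`, `|aᵢ|=2`, `|xᵢ|=3`, `dy = e1 a1 + e2 a2 + e3 a3`, `daᵢ = 0`,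
`dxᵢ = aᵢ²`, and `e1 ≠ 0`, the element
`x̃1 = x1 − e1⁻²(y·dy − 2e2 y·a2 − 2e3 y·a3 + e2² x2 + e3² x3)`
satisfies `d x̃1 = 2 e1⁻² e2 e3 · a2∧a3`. -/
theorem stmt_1
    (e1 e2 e3 : ℤ) (he1 : e1 ≠ 0)
    (A : Type) [Ring A] [Algebra ℝ A]
    (𝒜 : ℕ → Submodule ℝ A) [GradedAlgebra 𝒜]
    (d : A →ₗ[ℝ] A)
    (hdd : ∀ v : A, d (d v) = 0)
    (hdeg : ∀ n : ℕ, ∀ v ∈ 𝒜 n, d v ∈ 𝒜 (n + 1))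
    (hleibniz : ∀ m n : ℕ, ∀ v w : A, v ∈ 𝒜 m → w ∈ 𝒜 n →
      d (v * w) = d v * w + ((-1 : ℝ)) ^ m • (v * d w))
    (hkoszul : ∀ m n : ℕ, ∀ v w : A, v ∈ 𝒜 m → w ∈ 𝒜 n →
      v * w = ((-1 : ℝ)) ^ (m * n) • (w * v))
    (y a1 a2 a3 x1 x2 x3 : A)
    (hy : y ∈ 𝒜 1) (ha1 : a1 ∈ 𝒜 2) (ha2 : a2 ∈ 𝒜 2) (ha3 : a3 ∈ 𝒜 2)
    (hx1 : x1 ∈ 𝒜 3) (hx2 : x2 ∈ 𝒜 3) (hx3 : x3 ∈ 𝒜 3)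
    (hdy : d y = (e1 : ℝ) • a1 + (e2 : ℝ) • a2 + (e3 : ℝ) • a3)
    (hda1 : d a1 = 0) (hda2 : d a2 = 0) (hda3 : d a3 = 0)
    (hdx1 : d x1 = a1 * a1) (hdx2 : d x2 = a2 * a2) (hdx3 : d x3 = a3 * a3)
    -- freeness: the monomials in the generators form a basis of `A`
    (B : Module.Basis (Bool × (ℕ × ℕ × ℕ) × (Bool × Bool × Bool)) ℝ A)
    (hB : ∀ (εy : Bool) (i j k : ℕ) (ε1 ε2 ε3 : Bool),
      B (εy, (i, j, k), (ε1, ε2, ε3)) =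
        (if εy then y else 1) * (a1 ^ i * a2 ^ j * a3 ^ k) *
          ((if ε1 then x1 else 1) * (if ε2 then x2 else 1) * (if ε3 then x3 else 1))) :
    d (x1 - (((e1 : ℝ) ^ 2)⁻¹) •
        (y * d y - (2 * (e2 : ℝ)) • (y * a2) - (2 * (e3 : ℝ)) • (y * a3)
          + (e2 : ℝ) ^ 2 • x2 + (e3 : ℝ) ^ 2 • x3)) =
      (2 * ((e1 : ℝ) ^ 2)⁻¹ * (e2 : ℝ) * (e3 : ℝ)) • (a2 * a3) :=
  stmt_1_general e1 e2 e3 he1 A 𝒜 d hdd hdeg hleibniz hkoszul y a1 a2 a3 x1 x2 x3 hy ha1 ha2 ha3 hdy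
    hda2 hda3 hdx1 hdx2 hdx3
end

section
/- Let (P, g) be an oriented Riemannian 7-manifold with a 3-form φ satisfying dφ = τ0 ⋆φ for a nonzero constant τ0, where ⋆ is the Hodge star of g. On the product P × S¹ with the product metric, let θ denote the pullback of the volume 1-form of S¹ and define the 4-form Ω = φ∧θ + ⋆φ (forms on P pulled back to the product). Then dΩ = Ω ∧ (τ0·θ); in particular Ω satisfies the locally conformal parallel equation dΩ = Ω∧Θ with closed nonvanishing Lee form Θ = τ0·θ. -/
/-! Applying `d` to `dφ = τ₀ ψ` gives `dψ = 0` since `τ₀ ≠ 0`, and `θ ∧ θ = 0` because `θ` has odd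
degree. The Leibniz rule then leaves `dΩ = dφ ∧ θ = τ₀ ψ ∧ θ`, which is also what remains of
`Ω ∧ τ₀θ = τ₀ (φ ∧ θ ∧ θ + ψ ∧ θ)`. -/

theorem LinearMap.map_eq_zero_of_map_eq_smul {K M : Type*} [Field K] [AddCommGroup M]
    [Module K M] {d : M →ₗ[K] M} (hdd : ∀ v, d (d v) = 0) {c : K} (hc : c ≠ 0) {φ ψ : M}
    (h : d φ = c • ψ) : d ψ = 0 := by
  have hddφ := hdd φ
  rw [h, map_smul] at hddφ
  exact (smul_eq_zero.mp hddφ).resolve_left hc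

theorem mul_self_eq_zero_of_odd {K A : Type*} [Field K] [CharZero K] [Ring A] [Algebra K A]
    {m : ℕ} (hm : Odd m) {v : A} (h : v * v = (-1 : K) ^ (m * m) • (v * v)) : v * v = 0 := by
  rw [(hm.mul hm).neg_one_pow, neg_one_smul] at h
  have h2 : (2 : K) • (v * v) = 0 := by
    rw [two_smul]
    nth_rewrite 2 [h]
    exact add_neg_cancel _
  exact (smul_eq_zero.mp h2).resolve_left two_ne_zero

theorem stmt_12_general
    (τ0 : ℝ) (hτ0 : τ0 ≠ 0)
    (A : Type) [Ring A] [Algebra ℝ A]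
    (𝒜 : ℕ → Submodule ℝ A)
    (d : A →ₗ[ℝ] A)
    (hdd : ∀ v : A, d (d v) = 0)
    (hleibniz : ∀ m n : ℕ, ∀ v w : A, v ∈ 𝒜 m → w ∈ 𝒜 n →
      d (v * w) = d v * w + ((-1 : ℝ)) ^ m • (v * d w))
    (hkoszul : ∀ m n : ℕ, ∀ v w : A, v ∈ 𝒜 m → w ∈ 𝒜 n →
      v * w = ((-1 : ℝ)) ^ (m * n) • (w * v))
    (φ ψ θ : A)
    (hφ : φ ∈ 𝒜 3) (hθ : θ ∈ 𝒜 1)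
    -- the nearly parallel equation `dφ = τ0 ⋆φ` and closedness of `θ`
    (hdφ : d φ = τ0 • ψ) (hdθ : d θ = 0)
    -- `θ` is nonvanishing
    (hθ0 : θ ≠ 0) :
    d (φ * θ + ψ) = (φ * θ + ψ) * (τ0 • θ) ∧
    d (τ0 • θ) = 0 ∧ τ0 • θ ≠ 0 := by
  have hdψ : d ψ = 0 := d.map_eq_zero_of_map_eq_smul hdd hτ0 hdφ
  have hθθ : θ * θ = 0 := mul_self_eq_zero_of_odd odd_one (hkoszul 1 1 θ θ hθ hθ)
  refine ⟨?_, by rw [map_smul, hdθ, smul_zero], smul_ne_zero hτ0 hθ0⟩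
  calc d (φ * θ + ψ) = d φ * θ := by
        rw [map_add, hleibniz 3 1 φ θ hφ hθ, hdθ, hdψ, mul_zero, smul_zero, add_zero, add_zero]
    _ = τ0 • (φ * (θ * θ) + ψ * θ) := by rw [hdφ, hθθ, mul_zero, zero_add, smul_mul_assoc]
    _ = (φ * θ + ψ) * (τ0 • θ) := by rw [mul_smul_comm, add_mul, mul_assoc]

/-- abstracting the de Rham algebra of `P × S¹` as a
graded-commutative DGA: if `φ` is a degree-3 element (the nearly parallel
`G₂`-form on `P`), `ψ` a degree-4 element (the Hodge dual `⋆φ`), `θ` a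
closed degree-1 element (the volume form of `S¹`), with `dφ = τ0·ψ` and
`τ0 ≠ 0`, then the 4-form `Ω = φ∧θ + ψ` satisfies `dΩ = Ω ∧ (τ0·θ)`;
in particular it satisfies the locally conformal parallel equation
`dΩ = Ω∧Θ` with closed nonvanishing Lee form `Θ = τ0·θ`. -/
theorem stmt_12
    (τ0 : ℝ) (hτ0 : τ0 ≠ 0)
    (A : Type) [Ring A] [Algebra ℝ A]
    (𝒜 : ℕ → Submodule ℝ A) [GradedAlgebra 𝒜]
    (d : A →ₗ[ℝ] A)
    (hdd : ∀ v : A, d (d v) = 0)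
    (hdeg : ∀ n : ℕ, ∀ v ∈ 𝒜 n, d v ∈ 𝒜 (n + 1))
    (hleibniz : ∀ m n : ℕ, ∀ v w : A, v ∈ 𝒜 m → w ∈ 𝒜 n →
      d (v * w) = d v * w + ((-1 : ℝ)) ^ m • (v * d w))
    (hkoszul : ∀ m n : ℕ, ∀ v w : A, v ∈ 𝒜 m → w ∈ 𝒜 n →
      v * w = ((-1 : ℝ)) ^ (m * n) • (w * v))
    (φ ψ θ : A)
    (hφ : φ ∈ 𝒜 3) (hψ : ψ ∈ 𝒜 4) (hθ : θ ∈ 𝒜 1)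
    -- the nearly parallel equation `dφ = τ0 ⋆φ` and closedness of `θ`
    (hdφ : d φ = τ0 • ψ) (hdθ : d θ = 0)
    -- `θ` is nonvanishing
    (hθ0 : θ ≠ 0) :
    d (φ * θ + ψ) = (φ * θ + ψ) * (τ0 • θ) ∧
    d (τ0 • θ) = 0 ∧ τ0 • θ ≠ 0 :=
  stmt_12_general τ0 hτ0 A 𝒜 d hdd hleibniz hkoszul φ ψ θ hφ hθ hdφ hdθ hθ0
end
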